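/- Let θ ∈ [0, π/2), 0 < u_min ≤ u_max, T > 0, m > 0, q ≥ 0, p ∈ ℝ³ and p_m ∈ ℝ. Define φ(w) = (T/m)·⟨p, w⟩ − p_m·q·‖w‖ for w ∈ ℝ³, and Ψ = (T/m)·F(p) − p_m·q. Then sup_{w ∈ 𝒰} φ(w) = u_max·Ψ if Ψ ≥ 0 and sup_{w ∈ 𝒰} φ(w) = u_min·Ψ if Ψ ≤ 0; moreover, if Ψ > 0 then every maximizer w of φ over 𝒰 satisfies ‖w‖ = u_max, and if Ψ < 0 then every maximizer w of φ over 𝒰 satisfies ‖w‖ = u_min. -/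
import Mathlib

open RealInnerProductSpace

/-- The cone-restricted unit sphere `D = {d : ‖d‖ = 1 ∧ d_z ≥ cos θ}`. -/
def D (θ : ℝ) : Set (EuclideanSpace ℝ (Fin 3)) :=
  {d | ‖d‖ = 1 ∧ d 2 ≥ Real.cos θ}

/-- `F(p) = sup_{d ∈ D} ⟨p, d⟩`. -/
noncomputable def F (θ : ℝ) (p : EuclideanSpace ℝ (Fin 3)) : ℝ :=
  sSup ((fun d : EuclideanSpace ℝ (Fin 3) => ⟪p, d⟫) '' D θ)

/-- The control set `𝒰 = {w : u_min ≤ ‖w‖ ≤ u_max ∧ w_z ≥ ‖w‖ cos θ}`. -/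
def U (θ u_min u_max : ℝ) : Set (EuclideanSpace ℝ (Fin 3)) :=
  {w | u_min ≤ ‖w‖ ∧ ‖w‖ ≤ u_max ∧ w 2 ≥ ‖w‖ * Real.cos θ}

lemma D_compact (θ : ℝ) : IsCompact (D θ) := by
  have h1 : D θ = Metric.sphere 0 1 ∩ {d : EuclideanSpace ℝ (Fin 3) | Real.cos θ ≤ d 2} := by
    ext d
    simp only [D, Set.mem_setOf_eq, Set.mem_inter_iff, Metric.mem_sphere, dist_zero_right,
      ge_iff_le]
  rw [h1]
  exact (isCompact_sphere 0 1).inter_right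
    (isClosed_le continuous_const (EuclideanSpace.proj (2 : Fin 3)).continuous)

lemma D_nonempty (θ : ℝ) : (D θ).Nonempty := by
  refine ⟨EuclideanSpace.single (2 : Fin 3) (1:ℝ), ?_, ?_⟩
  · simp [EuclideanSpace.norm_single]
  · simpa using Real.cos_le_one θ

lemma D_bddAbove (θ : ℝ) (p : EuclideanSpace ℝ (Fin 3)) :
    BddAbove ((fun d : EuclideanSpace ℝ (Fin 3) => ⟪p, d⟫) '' D θ) := by
  refine ⟨‖p‖, ?_⟩
  rintro x ⟨d, ⟨hd1, _⟩, rfl⟩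
  calc ⟪p, d⟫ ≤ ‖p‖ * ‖d‖ := real_inner_le_norm p d
    _ = ‖p‖ := by rw [hd1, mul_one]

lemma F_le (θ : ℝ) (p : EuclideanSpace ℝ (Fin 3)) {d : EuclideanSpace ℝ (Fin 3)}
    (hd : d ∈ D θ) : ⟪p, d⟫ ≤ F θ p :=
  le_csSup (D_bddAbove θ p) ⟨d, hd, rfl⟩

lemma F_attained (θ : ℝ) (p : EuclideanSpace ℝ (Fin 3)) :
    ∃ d ∈ D θ, ⟪p, d⟫ = F θ p := by
  obtain ⟨d, hd, hmax⟩ := (D_compact θ).exists_isMaxOn (D_nonempty θ)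
    ((innerSL ℝ p).continuous.continuousOn)
  refine ⟨d, hd, le_antisymm (F_le θ p hd) (csSup_le ?_ ?_)⟩
  · exact (Set.Nonempty.image _ (D_nonempty θ))
  · rintro x ⟨d', hd', rfl⟩
    exact hmax hd'

/-- With `φ(w) = (T/m)⟨p, w⟩ − p_m q ‖w‖` and `Ψ = (T/m) F(p) − p_m q`, the supremum of `φ`
over `𝒰` is `u_max Ψ` if `Ψ ≥ 0` and `u_min Ψ` if `Ψ ≤ 0`; moreover every maximizer has
norm `u_max` when `Ψ > 0` and norm `u_min` when `Ψ < 0`. -/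
theorem stmt14 (θ u_min u_max T m q : ℝ)
    (hθ0 : 0 ≤ θ) (hθ1 : θ < Real.pi / 2)
    (humin : 0 < u_min) (huminmax : u_min ≤ u_max)
    (hT : 0 < T) (hm : 0 < m) (hq : 0 ≤ q)
    (p : EuclideanSpace ℝ (Fin 3)) (p_m : ℝ) :
    (0 ≤ (T / m) * F θ p - p_m * q →
      sSup ((fun w : EuclideanSpace ℝ (Fin 3) => (T / m) * ⟪p, w⟫ - p_m * q * ‖w‖) ''
          U θ u_min u_max)
        = u_max * ((T / m) * F θ p - p_m * q)) ∧
    ((T / m) * F θ p - p_m * q ≤ 0 →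
      sSup ((fun w : EuclideanSpace ℝ (Fin 3) => (T / m) * ⟪p, w⟫ - p_m * q * ‖w‖) ''
          U θ u_min u_max)
        = u_min * ((T / m) * F θ p - p_m * q)) ∧
    (0 < (T / m) * F θ p - p_m * q →
      ∀ w ∈ U θ u_min u_max,
        (∀ w' ∈ U θ u_min u_max,
          (T / m) * ⟪p, w'⟫ - p_m * q * ‖w'‖ ≤ (T / m) * ⟪p, w⟫ - p_m * q * ‖w‖) →
        ‖w‖ = u_max) ∧
    ((T / m) * F θ p - p_m * q < 0 →
      ∀ w ∈ U θ u_min u_max,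
        (∀ w' ∈ U θ u_min u_max,
          (T / m) * ⟪p, w'⟫ - p_m * q * ‖w'‖ ≤ (T / m) * ⟪p, w⟫ - p_m * q * ‖w‖) →
        ‖w‖ = u_min) := by
  set Ψ : ℝ := (T / m) * F θ p - p_m * q with hΨ
  set φ : EuclideanSpace ℝ (Fin 3) → ℝ :=
    fun w => (T / m) * ⟪p, w⟫ - p_m * q * ‖w‖ with hφ
  have hc : 0 ≤ T / m := le_of_lt (div_pos hT hm)
  obtain ⟨d, ⟨hd1, hd2⟩, hdF⟩ := F_attained θ p
  -- scaled points of D are in U, and φ of them is r * Ψ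
  have hscale : ∀ r : ℝ, u_min ≤ r → r ≤ u_max →
      (r • d) ∈ U θ u_min u_max ∧ φ (r • d) = r * Ψ := by
    intro r hr1 hr2
    have hr0 : 0 ≤ r := le_trans (le_of_lt humin) hr1
    have hnorm : ‖r • d‖ = r := by
      rw [norm_smul, hd1, mul_one, Real.norm_eq_abs, abs_of_nonneg hr0]
    refine ⟨⟨by rw [hnorm]; exact hr1, by rw [hnorm]; exact hr2, ?_⟩, ?_⟩
    · rw [hnorm]
      have : (r • d) 2 = r * d 2 := rfl
      rw [this]
      exact mul_le_mul_of_nonneg_left hd2 hr0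
    · simp only [hφ, hnorm, real_inner_smul_right, hdF, hΨ]
      ring
  -- key upper bound: φ(w) ≤ ‖w‖ * Ψ for w ∈ U
  have hkey : ∀ w ∈ U θ u_min u_max, φ w ≤ ‖w‖ * Ψ := by
    rintro w ⟨hw1, hw2, hw3⟩
    have hwn : 0 < ‖w‖ := lt_of_lt_of_le humin hw1
    have hwne : w ≠ 0 := fun h => by simp [h] at hwn
    set e : EuclideanSpace ℝ (Fin 3) := ‖w‖⁻¹ • w with he
    have heD : e ∈ D θ := by
      constructor
      · rw [he, norm_smul, Real.norm_eq_abs, abs_of_nonneg (inv_nonneg.2 hwn.le),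
          inv_mul_cancel₀ hwn.ne']
      · have : e 2 = ‖w‖⁻¹ * w 2 := rfl
        rw [this]
        calc Real.cos θ = ‖w‖⁻¹ * (‖w‖ * Real.cos θ) := by
              field_simp
          _ ≤ ‖w‖⁻¹ * w 2 := mul_le_mul_of_nonneg_left hw3 (inv_nonneg.2 hwn.le)
    have hpw : ⟪p, w⟫ = ‖w‖ * ⟪p, e⟫ := by
      rw [he, real_inner_smul_right]
      field_simp
    have h1 : ⟪p, e⟫ ≤ F θ p := F_le θ p heD
    calc φ w = ‖w‖ * ((T / m) * ⟪p, e⟫ - p_m * q) := by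
          simp only [hφ, hpw]; ring
      _ ≤ ‖w‖ * Ψ := by
          apply mul_le_mul_of_nonneg_left _ hwn.le
          rw [hΨ]
          exact sub_le_sub_right (mul_le_mul_of_nonneg_left h1 hc) _
  have hUne : (φ '' U θ u_min u_max).Nonempty :=
    ⟨φ (u_min • d), ⟨u_min • d, (hscale u_min le_rfl huminmax).1, rfl⟩⟩
  refine ⟨?_, ?_, ?_, ?_⟩
  · -- Ψ ≥ 0 case
    intro hΨ0
    apply le_antisymm
    · apply csSup_le hUne
      rintro x ⟨w, hw, rfl⟩
      calc φ w ≤ ‖w‖ * Ψ := hkey w hw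
        _ ≤ u_max * Ψ := mul_le_mul_of_nonneg_right hw.2.1 hΨ0
    · obtain ⟨hmem, hval⟩ := hscale u_max huminmax le_rfl
      rw [← hval]
      refine le_csSup ?_ ⟨u_max • d, hmem, rfl⟩
      refine ⟨u_max * Ψ, ?_⟩
      rintro x ⟨w, hw, rfl⟩
      calc φ w ≤ ‖w‖ * Ψ := hkey w hw
        _ ≤ u_max * Ψ := mul_le_mul_of_nonneg_right hw.2.1 hΨ0
  · -- Ψ ≤ 0 case
    intro hΨ0
    apply le_antisymm
    · apply csSup_le hUne
      rintro x ⟨w, hw, rfl⟩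
      calc φ w ≤ ‖w‖ * Ψ := hkey w hw
        _ ≤ u_min * Ψ := mul_le_mul_of_nonpos_right hw.1 hΨ0
    · obtain ⟨hmem, hval⟩ := hscale u_min le_rfl huminmax
      rw [← hval]
      refine le_csSup ?_ ⟨u_min • d, hmem, rfl⟩
      refine ⟨u_min * Ψ, ?_⟩
      rintro x ⟨w, hw, rfl⟩
      calc φ w ≤ ‖w‖ * Ψ := hkey w hw
        _ ≤ u_min * Ψ := mul_le_mul_of_nonpos_right hw.1 hΨ0
  · -- Ψ > 0 maximizer case
    intro hΨ0 w hw hmax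
    obtain ⟨hmem, hval⟩ := hscale u_max huminmax le_rfl
    have h1 : u_max * Ψ ≤ φ w := hval ▸ hmax _ hmem
    have h2 : φ w ≤ ‖w‖ * Ψ := hkey w hw
    have h3 : u_max ≤ ‖w‖ := le_of_mul_le_mul_right (by linarith) hΨ0
    exact le_antisymm hw.2.1 h3
  · -- Ψ < 0 maximizer case
    intro hΨ0 w hw hmax
    obtain ⟨hmem, hval⟩ := hscale u_min le_rfl huminmax
    have h1 : u_min * Ψ ≤ φ w := hval ▸ hmax _ hmem
    have h2 : φ w ≤ ‖w‖ * Ψ := hkey w hw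
    have h3 : ‖w‖ ≤ u_min := by nlinarith
    exact le_antisymm h3 hw.1
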